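/- arXiv:1407.6671 — 10 statements merged into one kernel-verified Lean document; each statement's English description precedes it below -/
import Mathlib

section
/- Let X be a locally Polish space. Then the set F(X) of closed subsets of X, endowed with the Effros Borel σ-algebra, is a standard Borel space. -/
/-!
Fix a countable basis `U` of `X` by completely metrizable open sets. A closed set is the closure
of itself, so it is determined by the set of basic opens it meets; this coding is a measurable
embedding of `Closeds X` into the Cantor space `ι → Bool`. A code `c` comes from a closed set iff
it is upward closed and every met `U k ⊆ U i` contains met basic sets of arbitrarily small
diameter for a complete metric on `U i`: the limit of a nested sequence of such sets is a point
of the decoded set. Only countably many basic sets are involved, so this image is Borel and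
`Closeds X` is standard Borel.
-/

open TopologicalSpace

/-- A locally Polish space is a topological space with a countable basis of open sets
which are Polish spaces in the relative topology. -/
def LocallyPolish (X : Type*) [TopologicalSpace X] : Prop :=
  ∃ B : Set (Set X), B.Countable ∧ IsTopologicalBasis B ∧ ∀ U ∈ B, PolishSpace U

/-- The Effros Borel σ-algebra on the space of closed subsets of a topological space:
the σ-algebra generated by the sets `{F : F ∩ U ≠ ∅}` for `U` open. -/
instance effrosMeasurableSpace (X : Type*) [TopologicalSpace X] :
    MeasurableSpace (Closeds X) :=
  MeasurableSpace.generateFrom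
    {S : Set (Closeds X) | ∃ U : Set X, IsOpen U ∧
      S = {F : Closeds X | ((F : Set X) ∩ U).Nonempty}}

open MeasureTheory Set Filter Topology

theorem MeasurableEquiv.standardBorelSpace {α β : Type*} [MeasurableSpace α] [MeasurableSpace β]
    [hβ : StandardBorelSpace β] (e : α ≃ᵐ β) : StandardBorelSpace α := by
  obtain ⟨τ, hτB, hτP⟩ := hβ.polish
  let : TopologicalSpace α := TopologicalSpace.induced e τ
  have : PolishSpace α :=
    (e.toEquiv.toHomeomorphOfIsInducing ⟨rfl⟩).isClosedEmbedding.polishSpace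
  have : BorelSpace α :=
    ⟨by rw [borel_comap, ← hτB.measurable_eq, e.measurableEmbedding.comap_eq]⟩
  exact standardBorel_of_polish

theorem MeasurableEmbedding.standardBorelSpace {α β : Type*} [MeasurableSpace α]
    [MeasurableSpace β] [StandardBorelSpace β] {f : α → β} (hf : MeasurableEmbedding f)
    (hrange : MeasurableSet (range f)) : StandardBorelSpace α :=
  haveI := hrange.standardBorel
  hf.equivRange.standardBorelSpace

theorem exists_forall_dist_le_of_antitone {Y : Type*} [PseudoMetricSpace Y] [CompleteSpace Y]
    {A : ℕ → Set Y} {ε : ℕ → ℝ} (hε : Tendsto ε atTop (𝓝 0)) (hA : Antitone A)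
    (hne : ∀ n, (A n).Nonempty) (hsmall : ∀ n, ∀ a ∈ A n, ∀ b ∈ A n, dist a b ≤ ε n) :
    ∃ y, ∀ n, ∀ a ∈ A n, dist a y ≤ ε n := by
  choose x hx using hne
  have hxA : ∀ n m, n ≤ m → x m ∈ A n := fun n m h => hA h (hx m)
  obtain ⟨y, hy⟩ := cauchySeq_tendsto_of_complete <| cauchySeq_of_le_tendsto_0 ε
    (fun p q n hp hq => hsmall n _ (hxA n p hp) _ (hxA n q hq)) hε
  refine ⟨y, fun n a ha => le_of_tendsto (tendsto_const_nhds.dist hy) ?_⟩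
  filter_upwards [eventually_ge_atTop n] with m hm using hsmall n a ha _ (hxA n m hm)

theorem exists_forall_mem_nhds_of_refining {Y κ : Type*} [PseudoMetricSpace Y] [CompleteSpace Y]
    {W : κ → Set Y} {P : κ → Prop} {ε : ℕ → ℝ} (hε : Tendsto ε atTop (𝓝 0)) {k₀ : κ}
    (hk₀ : P k₀) (hrefine : ∀ k, P k → ∀ n, ∃ l, P l ∧ (W l).Nonempty ∧ W l ⊆ W k ∧
      ∀ a ∈ W l, ∀ b ∈ W l, dist a b ≤ ε n) :
    ∃ y, ∀ O ∈ 𝓝 y, ∃ k, P k ∧ W k ⊆ O := by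
  choose next hnext using hrefine
  let seq : ℕ → {k // P k} :=
    fun n => Nat.rec ⟨k₀, hk₀⟩ (fun n k => ⟨next k k.2 n, (hnext k k.2 n).1⟩) n
  have hseq : ∀ n, (seq (n + 1) : κ) = next (seq n).1 (seq n).2 n := fun n => rfl
  have hanti : Antitone fun n => W (seq (n + 1)) := antitone_nat_of_succ_le fun n => by
    simp only [hseq (n + 1)]; exact (hnext _ _ _).2.2.1
  obtain ⟨y, hy⟩ := exists_forall_dist_le_of_antitone hε hanti
    (fun n => by simp only [hseq n]; exact (hnext _ _ _).2.1)
    (fun n => by simp only [hseq n]; exact (hnext _ _ _).2.2.2)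
  refine ⟨y, fun O hO => ?_⟩
  obtain ⟨δ, hδ, hball⟩ := Metric.mem_nhds_iff.1 hO
  obtain ⟨n, hn⟩ := (hε.eventually (gt_mem_nhds hδ)).exists
  exact ⟨seq (n + 1), (seq (n + 1)).2, fun a ha => hball ((hy n a ha).trans_lt hn)⟩

theorem TopologicalSpace.IsTopologicalBasis.exists_dist_le {X Y ι : Type*} [TopologicalSpace X]
    [PseudoMetricSpace Y] {U : ι → Set X} (hB : IsTopologicalBasis (range U)) {e : Y → X}
    (he : IsOpenEmbedding e) {V : Set X} (hV : IsOpen V) {y : Y} (hy : e y ∈ V) {ε : ℝ}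
    (hε : 0 < ε) : ∃ l, e y ∈ U l ∧ U l ⊆ V ∧ ∀ a b, e a ∈ U l → e b ∈ U l → dist a b ≤ ε := by
  have hopen : IsOpen (e '' Metric.ball y (ε / 2) ∩ V) :=
    (he.isOpenMap _ Metric.isOpen_ball).inter hV
  have hyO : e y ∈ e '' Metric.ball y (ε / 2) ∩ V :=
    ⟨mem_image_of_mem e (Metric.mem_ball_self (by positivity)), hy⟩
  obtain ⟨_, ⟨l, rfl⟩, hyl, hlsub⟩ := hB.exists_subset_of_mem_open hyO hopen
  have hball : ∀ a, e a ∈ U l → dist a y < ε / 2 := fun a ha =>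
    he.injective.mem_set_image.1 (hlsub ha).1
  refine ⟨l, hyl, fun x hx => (hlsub hx).2, fun a b ha hb => ?_⟩
  linarith [dist_triangle_right a b y, hball a ha, hball b hb]

theorem TopologicalSpace.IsTopologicalBasis.inter_nonempty_iff {X ι : Type*} [TopologicalSpace X]
    {U : ι → Set X} (hB : IsTopologicalBasis (range U)) (s : Set X) {V : Set X} (hV : IsOpen V) :
    (s ∩ V).Nonempty ↔ ∃ i, U i ⊆ V ∧ (s ∩ U i).Nonempty := by
  constructor
  · rintro ⟨x, hxs, hxV⟩
    obtain ⟨_, ⟨i, rfl⟩, hxi, hiV⟩ := hB.exists_subset_of_mem_open hxV hV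
    exact ⟨i, hiV, x, hxs, hxi⟩
  · rintro ⟨i, hiV, hne⟩
    exact hne.mono (inter_subset_inter_right s hiV)

section BasisCode

variable {X ι : Type*} [TopologicalSpace X] {U : ι → Set X}

open Classical in
noncomputable def basisCode (U : ι → Set X) (F : Closeds X) (i : ι) : Bool :=
  decide ((F : Set X) ∩ U i).Nonempty

theorem basisCode_eq_true_iff {F : Closeds X} {i : ι} :
    basisCode U F i = true ↔ ((F : Set X) ∩ U i).Nonempty := by
  simp [basisCode]

def decodeClosed (hU : ∀ i, IsOpen (U i)) (c : ι → Bool) : Closeds X :=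
  ⟨{x | ∀ i, x ∈ U i → c i = true}, by
    simp only [ofPred_forall]
    exact isClosed_iInter fun i => isClosed_imp (hU i) isClosed_const⟩

theorem decodeClosed_basisCode (hB : IsTopologicalBasis (range U)) (F : Closeds X) :
    decodeClosed (fun i => hB.isOpen (mem_range_self i)) (basisCode U F) = F := by
  ext x
  rw [← F.isClosed.closure_eq, hB.mem_closure_iff]
  simp [decodeClosed, basisCode_eq_true_iff, inter_comm]

theorem measurableSet_setOf_inter_nonempty {V : Set X} (hV : IsOpen V) :
    MeasurableSet {F : Closeds X | ((F : Set X) ∩ V).Nonempty} :=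
  MeasurableSpace.measurableSet_generateFrom ⟨V, hV, rfl⟩

theorem measurable_basisCode (hU : ∀ i, IsOpen (U i)) : Measurable (basisCode (X := X) U) :=
  measurable_pi_lambda _ fun i => measurable_to_bool <| by
    simpa only [preimage, mem_singleton_iff, basisCode_eq_true_iff]
      using measurableSet_setOf_inter_nonempty (hU i)

end BasisCode

section ClosedCode

variable {X ι : Type*} [TopologicalSpace X] {U : ι → Set X}
  [∀ i, IsCompletelyMetrizableSpace (U i)]

variable (U) in
def IsSmallIn (i : ι) (s : Set X) (r : ℕ) : Prop :=
  letI := upgradeIsCompletelyMetrizable (U i)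
  ∀ a ∈ ((↑) : U i → X) ⁻¹' s, ∀ b ∈ ((↑) : U i → X) ⁻¹' s, dist a b ≤ (1 / 2 : ℝ) ^ r

variable (U) in
def IsClosedCode (c : ι → Bool) : Prop :=
  (∀ k l, c k = true → U k ⊆ U l → c l = true) ∧
    ∀ i k r, c k = true → U k ⊆ U i →
      ∃ l, c l = true ∧ (U l).Nonempty ∧ U l ⊆ U k ∧ IsSmallIn U i (U l) r

theorem measurableSet_setOf_isClosedCode [Countable ι] :
    MeasurableSet {c | IsClosedCode U c} := by
  simp only [IsClosedCode, measurableSet_setOfPred]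
  fun_prop

theorem isClosedCode_basisCode (hB : IsTopologicalBasis (range U)) (F : Closeds X) :
    IsClosedCode U (basisCode U F) := by
  simp only [IsClosedCode, basisCode_eq_true_iff]
  refine ⟨fun k l hk hkl => hk.mono (inter_subset_inter_right _ hkl), ?_⟩
  rintro i k r ⟨x, hxF, hxk⟩ hki
  let := upgradeIsCompletelyMetrizable (U i)
  obtain ⟨l, hxl, hlk, hsmall⟩ := hB.exists_dist_le
    (hB.isOpen (mem_range_self i)).isOpenEmbedding_subtypeVal (hB.isOpen (mem_range_self k))
    (y := ⟨x, hki hxk⟩) hxk (ε := (1 / 2 : ℝ) ^ r) (by positivity)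
  exact ⟨l, ⟨x, hxF, hxl⟩, ⟨x, hxl⟩, hlk, fun a ha b hb => hsmall a b ha hb⟩

theorem exists_mem_decodeClosed_inter (hB : IsTopologicalBasis (range U)) {c : ι → Bool}
    (hc : IsClosedCode U c) {i : ι} (hi : c i = true) :
    ∃ x ∈ decodeClosed (fun i => hB.isOpen (mem_range_self i)) c, x ∈ U i := by
  let := upgradeIsCompletelyMetrizable (U i)
  have hrefine : ∀ k, c k = true ∧ U k ⊆ U i → ∀ r : ℕ, ∃ l, (c l = true ∧ U l ⊆ U i) ∧
      (((↑) : U i → X) ⁻¹' U l).Nonempty ∧ ((↑) : U i → X) ⁻¹' U l ⊆ (↑) ⁻¹' U k ∧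
      IsSmallIn U i (U l) r := by
    rintro k ⟨hk, hki⟩ r
    obtain ⟨l, hl, ⟨x, hxl⟩, hlk, hsmall⟩ := hc.2 i k r hk hki
    exact ⟨l, ⟨hl, hlk.trans hki⟩, ⟨⟨x, hki (hlk hxl)⟩, hxl⟩, preimage_mono hlk, hsmall⟩
  obtain ⟨y, hy⟩ := exists_forall_mem_nhds_of_refining
    (tendsto_pow_atTop_nhds_zero_of_lt_one (by norm_num) (by norm_num)) ⟨hi, subset_rfl⟩ hrefine
  -- every basic neighbourhood of `y` contains a met basic set, hence is met
  refine ⟨y, fun m hym => ?_, y.2⟩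
  obtain ⟨l, ⟨hl, hli⟩, hlm⟩ := hy _ ((hB.isOpen (mem_range_self m)).preimage
    continuous_subtype_val |>.mem_nhds hym)
  exact hc.1 l m hl fun x hx => hlm (a := ⟨x, hli hx⟩) hx

theorem basisCode_decodeClosed (hB : IsTopologicalBasis (range U)) {c : ι → Bool}
    (hc : IsClosedCode U c) :
    basisCode U (decodeClosed (fun i => hB.isOpen (mem_range_self i)) c) = c := by
  funext i
  cases hi : c i
  · rw [Bool.eq_false_iff, Ne, basisCode_eq_true_iff]
    rintro ⟨x, hx, hxi⟩
    exact absurd (hx i hxi) (by simp [hi])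
  · exact basisCode_eq_true_iff.2 (exists_mem_decodeClosed_inter hB hc hi)

theorem range_basisCode (hB : IsTopologicalBasis (range U)) :
    range (basisCode U) = {c | IsClosedCode U c} :=
  Subset.antisymm (range_subset_iff.2 (isClosedCode_basisCode hB))
    fun _ hc => ⟨_, basisCode_decodeClosed hB hc⟩

theorem measurableEmbedding_basisCode [Countable ι] (hB : IsTopologicalBasis (range U)) :
    MeasurableEmbedding (basisCode U) := by
  have hU : ∀ i, IsOpen (U i) := fun i => hB.isOpen (mem_range_self i)
  refine .of_measurable_inverse_on_range (measurable_basisCode hU)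
    (range_basisCode hB ▸ measurableSet_setOf_isClosedCode)
    (g := fun c => decodeClosed hU c.1) ?_ fun F => decodeClosed_basisCode hB F
  refine measurable_generateFrom ?_
  rintro _ ⟨V, hV, rfl⟩
  have hpre : (fun c : range (basisCode U) => decodeClosed hU c.1) ⁻¹'
      {F | ((F : Set X) ∩ V).Nonempty} = {c | ∃ i, U i ⊆ V ∧ c.1 i = true} := by
    ext ⟨_, F, rfl⟩
    simp only [mem_preimage, mem_ofPred_eq, decodeClosed_basisCode hB, basisCode_eq_true_iff]
    exact hB.inter_nonempty_iff F hV
  rw [hpre, measurableSet_setOfPred]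
  have hcoord : ∀ i, Measurable fun c : range (basisCode U) => c.1 i :=
    fun i => (measurable_pi_apply i).comp measurable_subtype_coe
  exact .exists fun i => measurable_const.and ((hcoord i).eq_const true)

theorem standardBorelSpace_closeds_of_isTopologicalBasis [Countable ι] (hB : IsTopologicalBasis (range U)) :
    StandardBorelSpace (Closeds X) :=
  (measurableEmbedding_basisCode hB).standardBorelSpace
    (range_basisCode hB ▸ measurableSet_setOf_isClosedCode)

end ClosedCode

/-- If `X` is locally Polish, then the space of closed subsets of `X` with the
Effros Borel σ-algebra is a standard Borel space. -/
theorem effros_standardBorelSpace (X : Type*) [TopologicalSpace X]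
    (hX : LocallyPolish X) : StandardBorelSpace (Closeds X) := by
  obtain ⟨B, hBc, hB, hBpolish⟩ := hX
  have : Countable B := hBc.to_subtype
  have : ∀ U : B, PolishSpace (U : Set X) := fun U => hBpolish U U.2
  exact standardBorelSpace_closeds_of_isTopologicalBasis (U := ((↑) : B → Set X)) (by rwa [Subtype.range_coe])
end

section
/- Let X be a locally Polish space. Then the set F₁(X) of closed subsets of X containing exactly one element is a Borel subset of F(X) with respect to the Effros Borel σ-algebra, and the map x ↦ {x} is a measurable isomorphism from X (with its Borel σ-algebra) onto F₁(X). -/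
open TopologicalSpace

/-! A closed set is a singleton iff it is nonempty and, whenever it meets two sets `U`, `V` of a
countable basis of Polish (hence Hausdorff) open sets, it also meets `U ∩ V`. Indeed, two distinct
points of such a set cannot lie in one Hausdorff basic set, as disjoint basic neighbourhoods would
separate them; and the space is T1, being covered by Hausdorff open sets, so any two distinct
points would produce a third point sharing a basic set with one of them. This condition is a
countable Boolean combination of the Effros generators `{F | F ∩ U ≠ ∅}`, and these generators
are also the preimages of open sets under the inverse of `x ↦ {x}`. -/

open Set Filter Topology

section

variable {X : Type*} [TopologicalSpace X]

theorem IsOpen.disjoint_nhds_of_t2Space {U : Set X} (hU : IsOpen U) [T2Space U] {x y : X}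
    (hx : x ∈ U) (hy : y ∈ U) (hxy : x ≠ y) : Disjoint (𝓝 x) (𝓝 y) := by
  have hsub : Disjoint (𝓝 (⟨x, hx⟩ : U)) (𝓝 ⟨y, hy⟩) :=
    disjoint_nhds_nhds.mpr (Subtype.coe_ne_coe.mp hxy)
  rwa [← disjoint_map Subtype.val_injective, map_nhds_subtype_coe_eq_nhds hx (hU.mem_nhds hx),
    map_nhds_subtype_coe_eq_nhds hy (hU.mem_nhds hy)] at hsub

theorem t1Space_of_forall_exists_isOpen_t2Space
    (h : ∀ x : X, ∃ U, IsOpen U ∧ x ∈ U ∧ T2Space U) : T1Space X := by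
  refine t1Space_iff_disjoint_nhds_pure.mpr fun x y hxy => ?_
  obtain ⟨U, hU, hxU, hT2⟩ := h x
  by_cases hyU : y ∈ U
  · exact (hU.disjoint_nhds_of_t2Space hxU hyU hxy).mono_right (pure_le_nhds y)
  · rw [← principal_singleton, disjoint_principal_right]
    exact mem_of_superset (hU.mem_nhds hxU) fun z hz (hzy : z = y) => hyU (hzy ▸ hz)

namespace TopologicalSpace.IsTopologicalBasis

variable {B : Set (Set X)} {S : Set X}

theorem inter_subsingleton_of_t2Space (hB : IsTopologicalBasis B)
    (hS : ∀ U ∈ B, ∀ V ∈ B, (S ∩ U).Nonempty → (S ∩ V).Nonempty → (S ∩ (U ∩ V)).Nonempty)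
    {U : Set X} (hU : IsOpen U) [T2Space U] :
    (S ∩ U).Subsingleton := by
  rintro x ⟨hxS, hxU⟩ y ⟨hyS, hyU⟩
  by_contra hxy
  obtain ⟨V, ⟨hVB, hxV⟩, W, ⟨hWB, hyW⟩, hVW⟩ :=
    (hB.nhds_hasBasis.disjoint_iff hB.nhds_hasBasis).mp (hU.disjoint_nhds_of_t2Space hxU hyU hxy)
  obtain ⟨z, -, hzV, hzW⟩ := hS V hVB W hWB ⟨x, hxS, hxV⟩ ⟨y, hyS, hyW⟩
  exact hVW.ne_of_mem hzV hzW rfl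

theorem subsingleton_of_forall_inter_subsingleton [T1Space X] (hB : IsTopologicalBasis B)
    (hS : ∀ U ∈ B, ∀ V ∈ B, (S ∩ U).Nonempty → (S ∩ V).Nonempty → (S ∩ (U ∩ V)).Nonempty)
    (hSB : ∀ U ∈ B, (S ∩ U).Subsingleton) : S.Subsingleton := by
  intro x hx y hy
  by_contra hxy
  obtain ⟨U, hUB, hxU, hUy⟩ := hB.exists_subset_of_mem_open hxy isOpen_compl_singleton
  obtain ⟨V, hVB, hyV, hVx⟩ :=
    hB.exists_subset_of_mem_open (Ne.symm hxy) isOpen_compl_singleton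
  obtain ⟨z, hzS, hzU, hzV⟩ := hS U hUB V hVB ⟨x, hx, hxU⟩ ⟨y, hy, hyV⟩
  exact hVx hzV (hSB U hUB ⟨hzS, hzU⟩ ⟨hx, hxU⟩)

theorem exists_eq_singleton_iff [T1Space X] (hB : IsTopologicalBasis B)
    (hBT2 : ∀ U ∈ B, T2Space U) :
    (∃ x, S = {x}) ↔ S.Nonempty ∧
      ∀ U ∈ B, ∀ V ∈ B, (S ∩ U).Nonempty → (S ∩ V).Nonempty → (S ∩ (U ∩ V)).Nonempty := by
  refine ⟨?_, fun ⟨hne, hS⟩ => exists_eq_singleton_iff_nonempty_subsingleton.mpr ⟨hne, ?_⟩⟩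
  · rintro ⟨x, rfl⟩
    exact ⟨singleton_nonempty x, fun U _ V _ ⟨_, rfl, hxU⟩ ⟨_, rfl, hxV⟩ => ⟨x, rfl, hxU, hxV⟩⟩
  · refine hB.subsingleton_of_forall_inter_subsingleton hS fun U hU => ?_
    have := hBT2 U hU
    exact hB.inter_subsingleton_of_t2Space hS (hB.isOpen hU)

end TopologicalSpace.IsTopologicalBasis

namespace TopologicalSpace.Closeds

theorem measurable_inter_nonempty {U : Set X} (hU : IsOpen U) :
    Measurable fun F : Closeds X => ((F : Set X) ∩ U).Nonempty :=
  measurableSet_setOfPred.mp (MeasurableSpace.measurableSet_generateFrom ⟨U, hU, rfl⟩)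

theorem measurableSet_exists_eq_singleton [T1Space X]
    {B : Set (Set X)} (hBc : B.Countable) (hB : IsTopologicalBasis B)
    (hBT2 : ∀ U ∈ B, T2Space U) :
    MeasurableSet {F : Closeds X | ∃ x, (F : Set X) = {x}} := by
  have := hBc.to_subtype
  simp_rw [fun S : Set X => hB.exists_eq_singleton_iff (S := S) hBT2]
  have hne := measurable_inter_nonempty (X := X) isOpen_univ
  simp only [inter_univ] at hne
  have hdir : Measurable fun F : Closeds X => ∀ U : B, ∀ V : B,
      ((F : Set X) ∩ U).Nonempty → ((F : Set X) ∩ V).Nonempty →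
        ((F : Set X) ∩ (U ∩ V)).Nonempty := by
    refine Measurable.forall fun U => Measurable.forall fun V => ?_
    have hU := hB.isOpen U.2
    have hV := hB.isOpen V.2
    exact (measurable_inter_nonempty hU).imp
      ((measurable_inter_nonempty hV).imp (measurable_inter_nonempty (hU.inter hV)))
  simp only [Subtype.forall] at hdir
  exact measurableSet_setOfPred.mpr (hne.and hdir)

theorem measurable_singleton [T1Space X] [MeasurableSpace X] [OpensMeasurableSpace X] :
    Measurable fun x : X => ({x} : Closeds X) := by
  refine measurable_generateFrom ?_
  rintro _ ⟨U, hU, rfl⟩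
  simpa only [preimage_ofPred_eq, coe_singleton, singleton_inter_nonempty, ofPred_mem_eq]
    using hU.measurableSet

noncomputable def singletonEquiv [T1Space X] : X ≃ {F : Closeds X // ∃ x, (F : Set X) = {x}} where
  toFun x := ⟨{x}, x, rfl⟩
  invFun F := F.2.choose
  left_inv x := by
    have h : ∃ y : X, ({x} : Set X) = {y} := ⟨x, rfl⟩
    exact (singleton_eq_singleton_iff.mp h.choose_spec).symm
  right_inv F := Subtype.ext (Closeds.ext F.2.choose_spec.symm)

theorem coe_singletonEquiv [T1Space X] (x : X) : ((singletonEquiv x).1 : Set X) = {x} := by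
  unfold singletonEquiv
  rfl

theorem measurable_singletonEquiv_symm [T1Space X] [MeasurableSpace X] [BorelSpace X] :
    Measurable (singletonEquiv (X := X)).symm := by
  refine measurable_of_isOpen fun U hU => ?_
  have hpre : singletonEquiv.symm ⁻¹' U =
      Subtype.val ⁻¹' {F : Closeds X | ((F : Set X) ∩ U).Nonempty} := by
    ext F
    exact (F.2.choose_spec ▸ singleton_inter_nonempty).symm
  rw [hpre]
  exact measurable_subtype_coe (measurableSet_setOfPred.mpr (measurable_inter_nonempty hU))

noncomputable def singletonMeasurableEquiv [T1Space X] [MeasurableSpace X] [BorelSpace X] :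
    X ≃ᵐ {F : Closeds X // ∃ x, (F : Set X) = {x}} where
  toEquiv := singletonEquiv
  measurable_toFun := measurable_singleton.subtype_mk
  measurable_invFun := measurable_singletonEquiv_symm

end TopologicalSpace.Closeds

end

/-- If `X` is locally Polish, then the set `F₁(X)` of closed subsets of `X` with exactly
one element is Borel in the Effros Borel σ-algebra, and `x ↦ {x}` is a measurable
isomorphism from `X` (with its Borel σ-algebra) onto `F₁(X)`. -/
theorem effros_singletons_borel_and_iso (X : Type*) [TopologicalSpace X]
    [MeasurableSpace X] [BorelSpace X] (hX : LocallyPolish X) :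
    MeasurableSet {F : Closeds X | ∃ x : X, (F : Set X) = {x}} ∧
    ∃ e : X ≃ᵐ {F : Closeds X // ∃ x : X, (F : Set X) = {x}},
      ∀ x : X, ((e x).1 : Set X) = {x} := by
  obtain ⟨B, hBc, hB, hBP⟩ := hX
  have hBT2 : ∀ U ∈ B, T2Space U := fun U hU => have := hBP U hU; inferInstance
  have : T1Space X := t1Space_of_forall_exists_isOpen_t2Space fun x =>
    have ⟨U, hUB, hxU, _⟩ := hB.exists_subset_of_mem_open (mem_univ x) isOpen_univ
    ⟨U, hB.isOpen hUB, hxU, hBT2 U hUB⟩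
  exact ⟨Closeds.measurableSet_exists_eq_singleton hBc hB hBT2,
    Closeds.singletonMeasurableEquiv, Closeds.coe_singletonEquiv⟩
end

section
/- Let X be a locally Polish space with a countable basis (U_n)_{n∈ω} of open Polish subsets. Then the set of y ∈ 2^ω for which there exists a closed subset F of X such that, for every n, y(n) = 1 if and only if F ∩ U_n ≠ ∅, is a Gδ subset of the Cantor space 2^ω. -/
/-!
A closed set `F` is recovered from its code `y` as `codedSet U y`, the complement of the union
of the `U i` with `y i = false`; this set is closed for every `y` and meets `U i` only when
`y i = true`. The converse, that `y i = true` forces `codedSet U y` to meet `U i`, is not an open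
condition on `y`, but it follows from countably many open ones (`IsAdmissibleCode`): coded basic
sets are nonempty, coding is monotone under inclusion of basic sets, and inside `U i` every coded
basic set contains coded basic sets of arbitrarily small diameter for a complete metric on `U i`.
Iterating the last condition gives a nested sequence of coded basic sets shrinking to a point of
`U i`, which lies in `codedSet U y` by monotonicity.
-/

open TopologicalSpace Filter Topology Metric Set.Notation ENNReal

theorem isOpen_imp {α : Type*} [TopologicalSpace α] {p q : α → Prop} (hp : IsClosed {x | p x})
    (hq : IsOpen {x | q x}) : IsOpen {x | p x → q x} := by
  simpa only [imp_iff_not_or] using! hp.isOpen_compl.union hq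

theorem isClopen_setOf_apply_eq {ι : Type*} {β : ι → Type*} [∀ i, TopologicalSpace (β i)]
    [∀ i, DiscreteTopology (β i)] (i : ι) (b : β i) : IsClopen {y : ∀ i, β i | y i = b} :=
  (isClopen_discrete {b}).preimage (continuous_apply i)

theorem exists_forall_mem_nhds_exists_subset_of_ediam_lt
    {Y : Type*} [PseudoEMetricSpace Y] [CompleteSpace Y] {s : ℕ → Set Y}
    (hs : Antitone s) (hne : ∀ k, (s k).Nonempty) (hdiam : ∀ ε > 0, ∃ k, ediam (s k) < ε) :
    ∃ x, ∀ t ∈ 𝓝 x, ∃ k, s k ⊆ t := by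
  have hbasis := hasBasis_iInf_principal hs.directed_ge
  have hcauchy : Cauchy (⨅ k, 𝓟 (s k)) := by
    refine EMetric.cauchy_iff.2 ⟨(hbasis.neBot_iff.2 fun {k} _ => hne k).ne, fun ε hε => ?_⟩
    obtain ⟨k, hk⟩ := hdiam ε hε
    exact ⟨s k, hbasis.mem_of_mem trivial,
      fun x hx y hy => (edist_le_ediam_of_mem hx hy).trans_lt hk⟩
  obtain ⟨x, hx⟩ := CompleteSpace.complete hcauchy
  exact ⟨x, fun t ht => by simpa using hbasis.mem_iff.1 (hx ht)⟩

section

variable {X ι : Type*} [TopologicalSpace X] {U : ι → Set X}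

def codedSet (U : ι → Set X) (y : ι → Bool) : Set X :=
  {x | ∀ i, x ∈ U i → y i = true}

theorem isClosed_codedSet (hU : ∀ i, IsOpen (U i)) (y : ι → Bool) : IsClosed (codedSet U y) := by
  simp only [codedSet, Set.ofPred_forall]
  exact isClosed_iInter fun i => isClosed_imp (hU i) isClosed_const

variable [∀ i, IsCompletelyMetrizableSpace (U i)]

noncomputable def basisDiam (U : ι → Set X) [∀ i, IsCompletelyMetrizableSpace (U i)] (i j : ι) :
    ℝ≥0∞ :=
  letI := upgradeIsCompletelyMetrizable (U i)
  ediam (U i ↓∩ U j)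

structure IsAdmissibleCode (U : ι → Set X) [∀ i, IsCompletelyMetrizableSpace (U i)]
    (y : ι → Bool) : Prop where
  nonempty : ∀ i, y i = true → (U i).Nonempty
  mono : ∀ i j, y i = true → U i ⊆ U j → y j = true
  shrink : ∀ i j (k : ℕ), y j = true → U j ⊆ U i →
    ∃ l, y l = true ∧ U l ⊆ U j ∧ basisDiam U i l ≤ (k : ℝ≥0∞)⁻¹

theorem exists_basisDiam_le (hbasis : IsTopologicalBasis (Set.range U)) {i j : ι} {x : X}
    (hxi : x ∈ U i) (hxj : x ∈ U j) {ε : ℝ≥0∞} (hε : 0 < ε) :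
    ∃ l, x ∈ U l ∧ U l ⊆ U j ∧ basisDiam U i l ≤ ε := by
  let _ := upgradeIsCompletelyMetrizable (U i)
  set x' : U i := ⟨x, hxi⟩
  have hball : eball x' (ε / 2) ∈ 𝓝 x' := eball_mem_nhds x' (ENNReal.half_pos hε.ne')
  have hball' : Subtype.val '' eball x' (ε / 2) ∈ 𝓝 x :=
    (hbasis.isOpen ⟨i, rfl⟩).isOpenMap_subtype_val.image_mem_nhds hball
  obtain ⟨_, ⟨l, rfl⟩, hxl, hl⟩ :=
    hbasis.mem_nhds_iff.1 (inter_mem hball' ((hbasis.isOpen ⟨j, rfl⟩).mem_nhds hxj))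
  refine ⟨l, hxl, fun z hz => (hl hz).2, ?_⟩
  calc ediam (U i ↓∩ U l) ≤ ediam (eball x' (ε / 2)) :=
        ediam_mono fun z hz => Subtype.val_injective.mem_set_image.1 (hl hz).1
    _ ≤ 2 * (ε / 2) := ediam_eball_le
    _ = ε := ENNReal.mul_div_cancel two_ne_zero ofNat_ne_top

theorem IsAdmissibleCode.nonempty_codedSet_inter (hU : ∀ i, IsOpen (U i)) {y : ι → Bool}
    (hy : IsAdmissibleCode U y) {i : ι} (hi : y i = true) : (codedSet U y ∩ U i).Nonempty := by
  let _ := upgradeIsCompletelyMetrizable (U i)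
  choose! next hnext_code hnext_sub hnext_diam using fun j k => hy.shrink i j k
  let c : ℕ → ι := fun k => Nat.rec i (fun k j => next j k) k
  have hc : ∀ k, y (c k) = true ∧ U (c k) ⊆ U i := by
    intro k
    induction k with
    | zero => exact ⟨hi, subset_rfl⟩
    | succ k ih => exact ⟨hnext_code _ k ih.1 ih.2, (hnext_sub _ k ih.1 ih.2).trans ih.2⟩
  have hanti : Antitone fun k => U i ↓∩ U (c k) :=
    antitone_nat_of_succ_le fun k => Set.preimage_mono (hnext_sub _ k (hc k).1 (hc k).2)
  have hne : ∀ k, (U i ↓∩ U (c k)).Nonempty := fun k => by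
    obtain ⟨x, hx⟩ := hy.nonempty _ (hc k).1
    exact ⟨⟨x, (hc k).2 hx⟩, hx⟩
  have hdiam : ∀ ε > 0, ∃ k, ediam (U i ↓∩ U (c k)) < ε := fun ε hε => by
    obtain ⟨k, hk⟩ := ENNReal.exists_inv_nat_lt hε.ne'
    exact ⟨k + 1, (hnext_diam _ k (hc k).1 (hc k).2).trans_lt hk⟩
  obtain ⟨x, hx⟩ := exists_forall_mem_nhds_exists_subset_of_ediam_lt hanti hne hdiam
  refine ⟨x, fun j hj => ?_, x.2⟩
  obtain ⟨k, hk⟩ := hx _ (((hU j).preimage continuous_subtype_val).mem_nhds hj)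
  exact hy.mono _ _ (hc k).1 fun z hz => hk (show (⟨z, (hc k).2 hz⟩ : U i) ∈ _ from hz)

theorem setOf_exists_isClosed_eq_setOf_isAdmissibleCode
    (hbasis : IsTopologicalBasis (Set.range U)) :
    {y : ι → Bool | ∃ F : Set X, IsClosed F ∧ ∀ i, y i = true ↔ (F ∩ U i).Nonempty} =
      {y | IsAdmissibleCode U y} := by
  have hU : ∀ i, IsOpen (U i) := fun i => hbasis.isOpen ⟨i, rfl⟩
  ext y
  constructor
  · rintro ⟨F, -, hF⟩
    refine ⟨fun i hi => ?_, fun i j hi hij => ?_, fun i j k hj hji => ?_⟩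
    · obtain ⟨x, -, hx⟩ := (hF i).1 hi
      exact ⟨x, hx⟩
    · obtain ⟨x, hxF, hx⟩ := (hF i).1 hi
      exact (hF j).2 ⟨x, hxF, hij hx⟩
    · obtain ⟨x, hxF, hxj⟩ := (hF j).1 hj
      obtain ⟨l, hxl, hlj, hl⟩ :=
        exists_basisDiam_le hbasis (hji hxj) hxj (ENNReal.inv_pos.2 (natCast_ne_top k))
      exact ⟨l, (hF l).2 ⟨x, hxF, hxl⟩, hlj, hl⟩
  · intro hy
    exact ⟨codedSet U y, isClosed_codedSet hU y, fun i =>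
      ⟨hy.nonempty_codedSet_inter hU, fun ⟨x, hxF, hxi⟩ => hxF i hxi⟩⟩

theorem isGδ_setOf_isAdmissibleCode [Countable ι] :
    IsGδ {y : ι → Bool | IsAdmissibleCode U y} := by
  have hcode (i : ι) := isClopen_setOf_apply_eq (β := fun _ => Bool) i true
  have : {y : ι → Bool | IsAdmissibleCode U y} =
      {y | ∀ i, y i = true → (U i).Nonempty} ∩ {y | ∀ i j, y i = true → U i ⊆ U j → y j = true} ∩
      {y | ∀ i j (k : ℕ), y j = true → U j ⊆ U i →
        ∃ l, y l = true ∧ U l ⊆ U j ∧ basisDiam U i l ≤ (k : ℝ≥0∞)⁻¹} := by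
    ext y
    exact ⟨fun ⟨h₁, h₂, h₃⟩ => ⟨⟨h₁, h₂⟩, h₃⟩, fun ⟨⟨h₁, h₂⟩, h₃⟩ => ⟨h₁, h₂, h₃⟩⟩
  rw [this]
  simp only [Set.ofPred_forall]
  refine (IsGδ.inter ?_ ?_).inter ?_
  · exact .iInter fun i => (isOpen_imp (hcode i).isClosed isOpen_const).isGδ
  · exact .iInter fun i => .iInter fun j =>
      (isOpen_imp (hcode i).isClosed (isOpen_imp isClosed_const (hcode j).isOpen)).isGδ
  · refine .iInter fun i => .iInter fun j => .iInter fun k =>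
      (isOpen_imp (hcode j).isClosed (isOpen_imp isClosed_const ?_)).isGδ
    simp only [Set.ofPred_exists]
    exact isOpen_iUnion fun l => (hcode l).isOpen.and isOpen_const

end

/-- Let `X` be a locally Polish space with a countable basis `(U n)` of open Polish
subsets. The set of `y ∈ 2^ω` for which there is a closed set `F ⊆ X` with
`y n = 1 ↔ F ∩ U n ≠ ∅` for every `n` is a Gδ subset of the Cantor space. -/
theorem isGδ_codes_of_closed_sets {X : Type*} [TopologicalSpace X]
    (U : ℕ → Set X) (hbasis : IsTopologicalBasis (Set.range U))
    (hpolish : ∀ n, PolishSpace (U n)) :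
    IsGδ {y : ℕ → Bool | ∃ F : Set X, IsClosed F ∧
      ∀ n : ℕ, y n = true ↔ (F ∩ U n).Nonempty} := by
  have := hpolish
  rw [setOf_exists_isClosed_eq_setOf_isAdmissibleCode hbasis]
  exact isGδ_setOf_isAdmissibleCode
end

section
/- Let X be a locally Polish space. Then there exists a Borel function σ from the set of nonempty closed subsets of X (with the Effros Borel σ-algebra) to X such that σ(A) ∈ A for every nonempty closed subset A of X. -/
/-!
Kuratowski–Ryll-Nardzewski, then gluing. In a Polish space with a complete metric and a dense
sequence `(xₙ)`, shrink a nonempty set `A` step by step, intersecting at stage `k` with the first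
ball `B(xₙ, 2⁻ᵏ)` that meets what is left. The centres of these balls form a Cauchy sequence whose
limit lies in the closure of `A`, and each centre is an Effros-measurable function of `A`, because
deciding which ball comes first only asks whether sets of the form `A ∩ U`, `U` open, are nonempty.
A locally Polish space is covered by countably many open Polish subspaces `Uₙ`. Selecting in the
closed subset `A ∩ Uₙ` of `Uₙ`, for the first `n` with `A ∩ Uₙ ≠ ∅`, is again a measurable choice.
-/

open TopologicalSpace

open Metric Set Filter Topology

section FirstIndex

variable {α β : Type*} [MeasurableSpace α] [MeasurableSpace β]

theorem measurable_sInf_nat {p : α → ℕ → Prop} (hp : ∀ n, MeasurableSet {a | p a n}) :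
    Measurable fun a => sInf {n | p a n} := by
  classical
  have hE : MeasurableSet {a | ∃ n, p a n} := by
    simpa only [ofPred_exists] using MeasurableSet.iUnion hp
  refine measurable_of_restrict_of_restrict_compl hE ?_ ?_
  · have h : {a | ∃ n, p a n}.domRestrict (fun a => sInf {n | p a n}) = fun a => Nat.find a.2 :=
      funext fun a => Nat.sInf_def a.2
    rw [h]
    exact measurable_find _ fun n => measurable_subtype_coe (hp n)
  · have h : {a | ∃ n, p a n}ᶜ.domRestrict (fun a => sInf {n | p a n}) = fun _ => 0 :=
      funext fun a => by
        have : {n | p a n} = ∅ := eq_empty_iff_forall_notMem.2 fun n hn => a.2 ⟨n, hn⟩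
        simp only [Set.domRestrict_apply, this, Nat.sInf_empty]
    rw [h]
    exact measurable_const

theorem Measurable.find_subtype {s : ℕ → Set α} [∀ a, DecidablePred fun n => a ∈ s n]
    {f : ∀ n, s n → β} (hf : ∀ n, Measurable (f n)) (hs : ∀ n, MeasurableSet (s n))
    (h : ∀ a, ∃ n, a ∈ s n) :
    Measurable fun a => f (Nat.find (h a)) ⟨a, Nat.find_spec (h a)⟩ := by
  rcases isEmpty_or_nonempty β with _ | ⟨⟨b⟩⟩
  · have : IsEmpty α := ⟨fun a => isEmptyElim (f _ ⟨a, Nat.find_spec (h a)⟩)⟩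
    exact measurable_of_empty _
  · have hg (n : ℕ) : Measurable fun a => if ha : a ∈ s n then f n ⟨a, ha⟩ else b :=
      (hf n).dite measurable_const (hs n)
    convert Measurable.find hg hs h with a
    rw [dif_pos (Nat.find_spec (h a))]

end FirstIndex

section FirstHit

variable {Y : Type*}

-- `sInf ∅ = 0`: the value is `0` when no `V n` meets `s`.
noncomputable def firstHit (V : ℕ → Set Y) (s : Set Y) : ℕ :=
  sInf {n | (s ∩ V n).Nonempty}

theorem inter_firstHit_nonempty {V : ℕ → Set Y} {s : Set Y} (h : ∃ n, (s ∩ V n).Nonempty) :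
    (s ∩ V (firstHit V s)).Nonempty :=
  Nat.sInf_mem h

end FirstHit

section Effros

variable {α Y : Type*} [MeasurableSpace α] [TopologicalSpace Y]

-- Measurability of `a ↦ S a` into the Effros structure, without requiring the `S a` closed.
def EffrosMeasurable (S : α → Set Y) : Prop :=
  ∀ U : Set Y, IsOpen U → MeasurableSet {a | (S a ∩ U).Nonempty}

theorem effrosMeasurable_closeds : EffrosMeasurable fun F : Closeds Y => (F : Set Y) :=
  fun U hU => MeasurableSpace.measurableSet_generateFrom ⟨U, hU, rfl⟩

namespace EffrosMeasurable

variable {S : α → Set Y} (hS : EffrosMeasurable S)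
include hS

theorem comp {β : Type*} [MeasurableSpace β] {f : β → α} (hf : Measurable f) :
    EffrosMeasurable fun b => S (f b) :=
  fun U hU => hf (hS U hU)

theorem preimage_val {U : Set Y} (hU : IsOpen U) :
    EffrosMeasurable fun a => (Subtype.val ⁻¹' S a : Set U) := by
  intro W hW
  have h (a : α) : ((Subtype.val ⁻¹' S a : Set U) ∩ W).Nonempty ↔
      (S a ∩ Subtype.val '' W).Nonempty :=
    ⟨fun ⟨y, hyS, hyW⟩ => ⟨y, hyS, y, hyW, rfl⟩,
      by rintro ⟨_, hyS, y, hyW, rfl⟩; exact ⟨y, hyS, hyW⟩⟩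
  simpa only [h] using hS _ (hU.isOpenMap_subtype_val W hW)

theorem inter_comp {N : α → ℕ} (hN : Measurable N) {V : ℕ → Set Y} (hV : ∀ n, IsOpen (V n)) :
    EffrosMeasurable fun a => S a ∩ V (N a) := by
  intro U hU
  have h : {a | (S a ∩ V (N a) ∩ U).Nonempty} =
      ⋃ n, N ⁻¹' {n} ∩ {a | (S a ∩ (V n ∩ U)).Nonempty} := by
    ext a
    simp [inter_assoc]
  rw [h]
  exact .iUnion fun n => (hN (measurableSet_singleton n)).inter (hS _ ((hV n).inter hU))

end EffrosMeasurable

theorem EffrosMeasurable.measurable_firstHit {S : α → Set Y} (hS : EffrosMeasurable S)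
    {V : ℕ → Set Y} (hV : ∀ n, IsOpen (V n)) : Measurable fun a => firstHit V (S a) :=
  measurable_sInf_nat fun n => hS _ (hV n)

end Effros

section NestedSets

variable {Y : Type*} [MetricSpace Y]

theorem exists_tendsto_mem_closure_of_antitone [CompleteSpace Y] {t : ℕ → Set Y}
    (ht : Antitone t) (hne : ∀ k, (t k).Nonempty) {c : ℕ → Y}
    (hc : ∀ k, t (k + 1) ⊆ ball (c k) (2⁻¹ ^ k)) :
    ∃ y ∈ closure (t 0), Tendsto c atTop (𝓝 y) := by
  choose z hz using hne
  have hzc (k : ℕ) : dist (z (k + 1)) (c k) < 2⁻¹ ^ k := hc k (hz (k + 1))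
  have hcauchy : CauchySeq c := by
    refine cauchySeq_of_le_geometric 2⁻¹ 2 (by norm_num) fun k => ?_
    calc dist (c k) (c (k + 1)) ≤ dist (z (k + 2)) (c k) + dist (z (k + 2)) (c (k + 1)) :=
          dist_triangle_left _ _ _
      _ ≤ 2⁻¹ ^ k + 2⁻¹ ^ (k + 1) :=
          add_le_add (hc k (ht (Nat.le_succ _) (hz _))).le (hzc _).le
      _ ≤ 2 * 2⁻¹ ^ k := by
          rw [pow_succ]
          linarith [pow_pos (by norm_num : (0 : ℝ) < 2⁻¹) k]
  obtain ⟨y, hy⟩ := cauchySeq_tendsto_of_complete hcauchy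
  have hdist : Tendsto (fun k => dist (c k) (z (k + 1))) atTop (𝓝 0) :=
    squeeze_zero (fun _ => dist_nonneg) (fun k => (dist_comm (c k) _ ▸ hzc k).le)
      (tendsto_pow_atTop_nhds_zero_of_lt_one (by norm_num) (by norm_num))
  exact ⟨y, mem_closure_of_tendsto (hy.congr_dist hdist)
    (Eventually.of_forall fun k => ht (Nat.zero_le _) (hz (k + 1))), hy⟩

theorem DenseRange.exists_inter_ball_nonempty {x : ℕ → Y} (hx : DenseRange x) {r : ℝ}
    (hr : 0 < r) {s : Set Y} (hs : s.Nonempty) : ∃ n, (s ∩ ball (x n) r).Nonempty := by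
  obtain ⟨y, hy⟩ := hs
  obtain ⟨n, hn⟩ := hx.exists_dist_lt y hr
  exact ⟨n, y, hy, hn⟩

variable (x : ℕ → Y)

noncomputable def dyadicBalls (k n : ℕ) : Set Y :=
  ball (x n) (2⁻¹ ^ k)

noncomputable def nestedSet (s : Set Y) : ℕ → Set Y
  | 0 => s
  | k + 1 => nestedSet s k ∩ dyadicBalls x k (firstHit (dyadicBalls x k) (nestedSet s k))

noncomputable def nestedCenter (s : Set Y) (k : ℕ) : Y :=
  x (firstHit (dyadicBalls x k) (nestedSet x s k))

theorem antitone_nestedSet (s : Set Y) : Antitone (nestedSet x s) :=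
  antitone_nat_of_succ_le fun _ => inter_subset_left

theorem nestedSet_succ_subset_ball (s : Set Y) (k : ℕ) :
    nestedSet x s (k + 1) ⊆ ball (nestedCenter x s k) (2⁻¹ ^ k) :=
  inter_subset_right

theorem nestedSet_nonempty {x : ℕ → Y} (hx : DenseRange x) {s : Set Y} (hs : s.Nonempty) :
    ∀ k, (nestedSet x s k).Nonempty
  | 0 => hs
  | k + 1 => inter_firstHit_nonempty
      (hx.exists_inter_ball_nonempty (by positivity) (nestedSet_nonempty hx hs k))

variable {α : Type*} [MeasurableSpace α] {S : α → Set Y}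

theorem EffrosMeasurable.nestedSet (hS : EffrosMeasurable S) :
    ∀ k, EffrosMeasurable fun a => _root_.nestedSet x (S a) k
  | 0 => hS
  | k + 1 => (hS.nestedSet k).inter_comp
      ((hS.nestedSet k).measurable_firstHit fun _ => isOpen_ball) fun _ => isOpen_ball

theorem EffrosMeasurable.measurable_nestedCenter [MeasurableSpace Y] (hS : EffrosMeasurable S)
    (k : ℕ) : Measurable fun a => nestedCenter x (S a) k :=
  measurable_from_nat.comp ((hS.nestedSet x k).measurable_firstHit fun _ => isOpen_ball)

end NestedSets

theorem EffrosMeasurable.exists_measurable_selector {α Y : Type*} [MeasurableSpace α]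
    [TopologicalSpace Y] [PolishSpace Y] [MeasurableSpace Y] [BorelSpace Y] {S : α → Set Y}
    (hS : EffrosMeasurable S) (hne : ∀ a, (S a).Nonempty) :
    ∃ σ : α → Y, Measurable σ ∧ ∀ a, σ a ∈ closure (S a) := by
  rcases isEmpty_or_nonempty α with _ | ⟨⟨a₀⟩⟩
  · exact ⟨isEmptyElim, measurable_of_empty _, isEmptyElim⟩
  let := upgradeIsCompletelyMetrizable Y
  have : Nonempty Y := ⟨(hne a₀).some⟩
  obtain ⟨x, hx⟩ := exists_dense_seq Y
  choose σ hσS hσ using fun a => exists_tendsto_mem_closure_of_antitone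
    (antitone_nestedSet x (S a)) (nestedSet_nonempty hx (hne a))
    (nestedSet_succ_subset_ball x (S a))
  exact ⟨σ, measurable_of_tendsto_metrizable (hS.measurable_nestedCenter x)
    (tendsto_pi_nhds.2 hσ), hσS⟩

theorem EffrosMeasurable.exists_measurable_selector_of_iUnion_eq_univ {α X : Type*}
    [MeasurableSpace α] [TopologicalSpace X] [MeasurableSpace X] [BorelSpace X]
    {S : α → Set X} (hS : EffrosMeasurable S) (hne : ∀ a, (S a).Nonempty)
    (hclosed : ∀ a, IsClosed (S a)) {u : ℕ → Set X} (hopen : ∀ n, IsOpen (u n))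
    (hpolish : ∀ n, PolishSpace (u n)) (hcover : ⋃ n, u n = univ) :
    ∃ σ : α → X, Measurable σ ∧ ∀ a, σ a ∈ S a := by
  classical
  let H : ℕ → Set α := fun n => {a | (S a ∩ u n).Nonempty}
  have hsel (n : ℕ) : ∃ σ : H n → X, Measurable σ ∧ ∀ a, σ a ∈ S a.1 := by
    have := hpolish n
    have hne_restrict (a : H n) : (Subtype.val ⁻¹' S a.1 : Set (u n)).Nonempty := by
      obtain ⟨y, hyS, hyu⟩ := a.2
      exact ⟨⟨y, hyu⟩, hyS⟩
    obtain ⟨σ, hσm, hσ⟩ := ((hS.comp measurable_subtype_coe).preimage_val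
      (hopen n)).exists_measurable_selector hne_restrict
    refine ⟨fun a => σ a, measurable_subtype_coe.comp hσm, fun a => ?_⟩
    simpa [((hclosed a).preimage continuous_subtype_val).closure_eq] using hσ a
  choose σ hσm hσ using hsel
  have hH (a : α) : ∃ n, a ∈ H n := by
    obtain ⟨y, hy⟩ := hne a
    obtain ⟨n, hn⟩ := iUnion_eq_univ_iff.1 hcover y
    exact ⟨n, y, hy, hn⟩
  exact ⟨_, Measurable.find_subtype hσm (fun n => hS _ (hopen n)) hH, fun a => hσ _ ⟨a, _⟩⟩

/-- If `X` is locally Polish then there is a Borel map `σ` from the space of nonempty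
closed subsets of `X` (with the Effros Borel σ-algebra) to `X` such that `σ A ∈ A`
for every nonempty closed set `A`. -/
theorem exists_borel_selector (X : Type*) [TopologicalSpace X]
    [MeasurableSpace X] [BorelSpace X] (hX : LocallyPolish X) :
    ∃ σ : {F : Closeds X // (F : Set X).Nonempty} → X,
      Measurable σ ∧ ∀ A : {F : Closeds X // (F : Set X).Nonempty}, σ A ∈ (A.1 : Set X) := by
  obtain ⟨B, hBc, hB, hBpolish⟩ := hX
  rcases B.eq_empty_or_nonempty with rfl | hBne
  · have : IsEmpty X := by simpa [eq_comm (a := ∅)] using hB.sUnion_eq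
    have : IsEmpty {F : Closeds X // (F : Set X).Nonempty} := ⟨fun A => isEmptyElim A.2.some⟩
    exact ⟨isEmptyElim, measurable_of_empty _, isEmptyElim⟩
  obtain ⟨u, rfl⟩ := hBc.exists_eq_range hBne
  exact (effrosMeasurable_closeds.comp measurable_subtype_coe)
    |>.exists_measurable_selector_of_iUnion_eq_univ (fun A => A.2) (fun A => A.1.isClosed)
      (fun n => hB.isOpen ⟨n, rfl⟩) (fun n => hBpolish _ ⟨n, rfl⟩)
      (by rw [← sUnion_range, hB.sUnion_eq])
end

section
/- Let G be a second countable topological space, Y a Polish space, and let r, s : G → Y be continuous open surjections such that the fiber s⁻¹({x}) is a Baire space (in the subspace topology) for every x ∈ Y. If A ⊆ Y is meager, then the set of x ∈ Y such that {γ ∈ s⁻¹({x}) : r(γ) ∈ A} is nonmeager in the subspace s⁻¹({x}) is a meager subset of Y. -/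
/-!
A meagre set `A` pulls back under the continuous open map `r` to a meagre set, contained in
countably many closed sets `F` with empty interior. For such an `F` and a basic open `U`, the
image `s '' (U \ F)` is open and dense in `s '' U`, so its frontier is nowhere dense in `Y`.
A point `x` off all these countably many frontiers sees every `F` as a nowhere dense set in
the fiber `s ⁻¹' {x}`: a basic open `U` meeting the fiber inside `F` would put `x` in
`closure (s '' (U \ F))` but not in `s '' (U \ F)`.
-/

open Set TopologicalSpace

lemma IsOpen.isNowhereDense_frontier {X : Type*} [TopologicalSpace X] {W : Set X}
    (hW : IsOpen W) : IsNowhereDense (frontier W) := by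
  rw [isClosed_frontier.isNowhereDense_iff, ← frontier_compl]
  exact interior_frontier hW.isClosed_compl

section Fiber

variable {G Y : Type*} [TopologicalSpace G] [TopologicalSpace Y] {s : G → Y}

lemma image_subset_closure_image_diff (hs : Continuous s) {U F : Set G} (hU : IsOpen U)
    (hF : interior F = ∅) : s '' U ⊆ closure (s '' (U \ F)) := by
  have hU_sub : U ⊆ closure (U \ F) :=
    (interior_eq_empty_iff_dense_compl.mp hF).open_subset_closure_inter hU
  exact (image_mono hU_sub).trans (image_closure_subset_closure_image hs)

lemma isNowhereDense_fiber_of_forall_notMem {B : Set (Set G)} (hB : IsTopologicalBasis B)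
    (hs : Continuous s) {F : Set G} (hFc : IsClosed F) (hF : interior F = ∅) {x : Y}
    (hx : ∀ U ∈ B, x ∉ closure (s '' (U \ F)) \ s '' (U \ F)) :
    IsNowhereDense {γ : s ⁻¹' {x} | (γ : G) ∈ F} := by
  set T : Set (s ⁻¹' {x}) := {γ | (γ : G) ∈ F}
  have hT : IsClosed T := hFc.preimage continuous_subtype_val
  rw [hT.isNowhereDense_iff, eq_empty_iff_forall_notMem]
  intro γ hγ
  obtain ⟨O, hO, hO_eq⟩ := isOpen_induced_iff.mp (isOpen_interior (s := T))
  have hγO : (γ : G) ∈ O := by rw [← hO_eq] at hγ; exact hγ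
  obtain ⟨U, hUB, hγU, hUO⟩ := hB.exists_subset_of_mem_open hγO hO
  refine hx U hUB ⟨image_subset_closure_image_diff hs (hB.isOpen hUB) hF ⟨γ, hγU, γ.2⟩, ?_⟩
  rintro ⟨g, ⟨hgU, hgF⟩, hgx⟩
  have hg_int : (⟨g, hgx⟩ : s ⁻¹' {x}) ∈ interior T := hO_eq ▸ hUO hgU
  exact hgF (interior_subset (s := T) hg_int)

variable [SecondCountableTopology G]

lemma isMeagre_setOf_not_isNowhereDense_fiber (hsc : Continuous s) (hso : IsOpenMap s)
    {F : Set G} (hFc : IsClosed F) (hF : interior F = ∅) :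
    IsMeagre {x | ¬ IsNowhereDense {γ : s ⁻¹' {x} | (γ : G) ∈ F}} := by
  have hB := isBasis_countableBasis G
  refine (isMeagre_biUnion (countable_countableBasis G) fun U hU =>
    (hso _ ((hB.isOpen hU).sdiff hFc)).isNowhereDense_frontier.isMeagre).mono ?_
  intro x hx
  by_contra hx_frontier
  simp only [mem_iUnion, not_exists] at hx_frontier
  refine hx (isNowhereDense_fiber_of_forall_notMem hB hsc hFc hF fun U hU => ?_)
  rw [← (hso _ ((hB.isOpen hU).sdiff hFc)).frontier_eq]
  exact hx_frontier U hU

theorem IsMeagre.isMeagre_setOf_not_isMeagre_fiber (hsc : Continuous s) (hso : IsOpenMap s)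
    {M : Set G} (hM : IsMeagre M) :
    IsMeagre {x | ¬ IsMeagre {γ : s ⁻¹' {x} | (γ : G) ∈ M}} := by
  obtain ⟨S, hS, hS_count, hMS⟩ := isMeagre_iff_countable_union_isNowhereDense.mp hM
  refine (isMeagre_biUnion hS_count fun t ht =>
    isMeagre_setOf_not_isNowhereDense_fiber hsc hso isClosed_closure (hS t ht)).mono ?_
  intro x hx
  by_contra hx_good
  simp only [mem_iUnion, not_exists, mem_ofPred_eq, not_not] at hx_good
  refine hx ((isMeagre_biUnion hS_count fun t ht => (hx_good t ht).isMeagre).mono ?_)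
  intro γ hγ
  obtain ⟨t, ht, hγt⟩ := hMS hγ
  exact mem_biUnion ht (subset_closure hγt)

end Fiber

theorem meager_vaught_transform_general {G Y : Type*} [TopologicalSpace G]
    [SecondCountableTopology G] [TopologicalSpace Y]
    (r s : G → Y)
    (hrc : Continuous r) (hro : IsOpenMap r)
    (hsc : Continuous s) (hso : IsOpenMap s)
    (A : Set Y) (hA : IsMeagre A) :
    IsMeagre {x : Y | ¬ IsMeagre {γ : (s ⁻¹' {x} : Set G) | r (γ : G) ∈ A}} :=
  (hA.preimage_of_isOpenMap hrc hro).isMeagre_setOf_not_isMeagre_fiber hsc hso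

/-- Let `G` be second countable, `Y` Polish, and `r, s : G → Y` continuous open
surjections such that every fiber of `s` is a Baire space. If `A ⊆ Y` is meager, then
the set of `x ∈ Y` such that `{γ ∈ s⁻¹(x) : r γ ∈ A}` is nonmeager in `s⁻¹(x)` is
meager in `Y`. -/
theorem meager_vaught_transform {G Y : Type*} [TopologicalSpace G]
    [SecondCountableTopology G] [TopologicalSpace Y] [PolishSpace Y]
    (r s : G → Y)
    (hrc : Continuous r) (hro : IsOpenMap r) (hrsurj : Function.Surjective r)
    (hsc : Continuous s) (hso : IsOpenMap s) (hssurj : Function.Surjective s)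
    (hBaire : ∀ x : Y, BaireSpace (s ⁻¹' {x}))
    (A : Set Y) (hA : IsMeagre A) :
    IsMeagre {x : Y | ¬ IsMeagre {γ : (s ⁻¹' {x} : Set G) | r (γ : G) ∈ A}} :=
  meager_vaught_transform_general r s hrc hro hsc hso A hA
end

section
/- Let X be a Polish space and E an equivalence relation on X such that the E-saturation of every open subset of X is open. Define the relation Ē on X by (x, y) ∈ Ē if and only if the closures of the E-classes of x and y coincide. Then Ē is a Gδ subset of X × X and E ⊆ Ē. -/
/-!
Fix a countable basis `b`. Two sets have the same closure iff they meet the same members of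
`b`, and the `E`-class of `x` meets `U` iff `x` lies in the saturation `[U]`. Hence
`Ē = ⋂ U ∈ b, {(x, y) | x ∈ [U] ↔ y ∈ [U]}`. Each `[U]` is open, so each set in this countable
intersection is the union of the open set `[U] × [U]` and the closed set `[U]ᶜ × [U]ᶜ`, and
both are Gδ in the metrizable space `X × X`.
-/

open Set TopologicalSpace

theorem TopologicalSpace.IsTopologicalBasis.closure_eq_closure_iff {X : Type*}
    [TopologicalSpace X] {b : Set (Set X)} (hb : IsTopologicalBasis b) {s t : Set X} :
    closure s = closure t ↔ ∀ U ∈ b, ((s ∩ U).Nonempty ↔ (t ∩ U).Nonempty) := by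
  refine ⟨fun h U hU => ?_, fun h => ?_⟩
  · rw [← closure_inter_open_nonempty_iff (hb.isOpen hU), h,
      closure_inter_open_nonempty_iff (hb.isOpen hU)]
  · ext x
    simp only [hb.mem_closure_iff, inter_comm _ s, inter_comm _ t]
    exact forall₂_congr fun U hU => imp_congr_right fun _ => h U hU

theorem IsOpen.isGδ_setOf_mem_iff_mem {X : Type*} [TopologicalSpace X]
    [PseudoMetrizableSpace X] {U : Set X} (hU : IsOpen U) :
    IsGδ {p : X × X | p.1 ∈ U ↔ p.2 ∈ U} := by
  have hsplit : {p : X × X | p.1 ∈ U ↔ p.2 ∈ U} = U ×ˢ U ∪ Uᶜ ×ˢ Uᶜ := by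
    ext p
    simp only [mem_ofPred_eq, mem_union, mem_prod, mem_compl_iff]
    tauto
  rw [hsplit]
  exact (hU.prod hU).isGδ.union (hU.isClosed_compl.prod hU.isClosed_compl).isGδ

theorem mem_setOf_exists_rel_iff {X : Type*} {E : X → X → Prop} [Std.Symm E] {U : Set X}
    {y : X} : y ∈ {y : X | ∃ x ∈ U, E y x} ↔ ({z : X | E z y} ∩ U).Nonempty :=
  ⟨fun ⟨x, hx, hyx⟩ => ⟨x, Std.Symm.symm _ _ hyx, hx⟩,
    fun ⟨z, hzy, hz⟩ => ⟨z, hz, Std.Symm.symm _ _ hzy⟩⟩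

theorem Equivalence.setOf_rel_eq {X : Type*} {E : X → X → Prop} (hE : Equivalence E) {x y : X}
    (hxy : E x y) : {z : X | E z x} = {z : X | E z y} :=
  ext fun _ => ⟨fun h => hE.trans h hxy, fun h => hE.trans h (hE.symm hxy)⟩

/-- Let `X` be Polish and `E` an equivalence relation whose saturations of open sets
are open. The relation `Ē`, holding when the closures of the `E`-classes coincide, is
a Gδ subset of `X × X` and contains `E`. -/
theorem closure_relation_isGδ {X : Type*} [TopologicalSpace X] [PolishSpace X]
    (E : X → X → Prop) (hE : Equivalence E)
    (hsat : ∀ U : Set X, IsOpen U → IsOpen {y : X | ∃ x ∈ U, E y x}) :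
    IsGδ {p : X × X | closure {z : X | E z p.1} = closure {z : X | E z p.2}} ∧
    ∀ x y : X, E x y →
      closure {z : X | E z x} = closure {z : X | E z y} := by
  refine ⟨?_, fun x y hxy => by rw [hE.setOf_rel_eq hxy]⟩
  have := hE.stdSymm
  obtain ⟨b, hbc, -, hb⟩ := exists_countable_basis X
  have hEbar : {p : X × X | closure {z : X | E z p.1} = closure {z : X | E z p.2}} =
      ⋂ U ∈ b, {p : X × X | p.1 ∈ {y | ∃ x ∈ U, E y x} ↔ p.2 ∈ {y | ∃ x ∈ U, E y x}} := by
    ext p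
    rw [mem_iInter₂]
    exact hb.closure_eq_closure_iff.trans <| forall₂_congr fun _ _ =>
      iff_congr mem_setOf_exists_rel_iff.symm mem_setOf_exists_rel_iff.symm
  rw [hEbar]
  exact .biInter hbc fun U hU => (hsat U (hb.isOpen hU)).isGδ_setOf_mem_iff_mem
end

section
/- Let X be a Polish space and E an equivalence relation on X such that the E-saturation of every open subset of X is open and every E-class is a Gδ subset of X. If x, y ∈ X are such that [x] ≠ [y] and [y] meets the closure of [x], then the closure of [y] is disjoint from [x]. -/
/-!
Since saturations of open sets are open, the closure of a saturated set is saturated. Hence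
`[y]` meeting `cl [x]` gives `[y] ⊆ cl [x]`, and if `cl [y]` also met `[x]` the two classes would
have the same closure `C`. Then `[x]` and `[y]` are dense Gδ subsets of `C`, which is closed in a
Polish space and therefore Baire, so they intersect and `[x] = [y]`.
-/

open Set TopologicalSpace

theorem IsGδ.inter_nonempty_of_closure_eq {X : Type*} [TopologicalSpace X]
    [IsCompletelyMetrizableSpace X] {s t : Set X} (hs : IsGδ s) (ht : IsGδ t)
    (hst : closure s = closure t) (hne : s.Nonempty) : (s ∩ t).Nonempty := by
  have : IsCompletelyMetrizableSpace (closure s) := isClosed_closure.isCompletelyMetrizableSpace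
  have hs_dense : Dense ((↑) ⁻¹' s : Set (closure s)) := by
    simp [Subtype.dense_iff, inter_eq_right.mpr subset_closure]
  have ht_dense : Dense ((↑) ⁻¹' t : Set (closure s)) := by
    simp [Subtype.dense_iff, hst, inter_eq_right.mpr subset_closure]
  have : Nonempty (closure s) := (hne.mono subset_closure).to_subtype
  obtain ⟨⟨p, _⟩, hps, hpt⟩ :=
    (hs_dense.inter_of_Gδ (hs.preimage continuous_subtype_val) (ht.preimage continuous_subtype_val)
      ht_dense).nonempty
  exact ⟨p, hps, hpt⟩

section Saturation

variable {X : Type*} [TopologicalSpace X] {E : X → X → Prop}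

theorem closure_saturated (hE : Equivalence E)
    (hsat : ∀ U : Set X, IsOpen U → IsOpen {y : X | ∃ x ∈ U, E y x}) {A : Set X}
    (hA : ∀ ⦃u v⦄, E u v → v ∈ A → u ∈ A) ⦃u v : X⦄ (huv : E u v) (hv : v ∈ closure A) :
    u ∈ closure A := by
  rw [mem_closure_iff] at hv ⊢
  intro U hU huU
  obtain ⟨p, ⟨q, hqU, hpq⟩, hpA⟩ := hv _ (hsat U hU) ⟨u, huU, hE.symm huv⟩
  exact ⟨q, hqU, hA (hE.symm hpq) hpA⟩

theorem class_subset_closure_class_of_inter_nonempty (hE : Equivalence E)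
    (hsat : ∀ U : Set X, IsOpen U → IsOpen {y : X | ∃ x ∈ U, E y x}) {a b : X}
    (hmeet : ({z : X | E z b} ∩ closure {z : X | E z a}).Nonempty) :
    {z : X | E z b} ⊆ closure {z : X | E z a} := by
  obtain ⟨c, hcb, hca⟩ := hmeet
  intro w hwb
  exact closure_saturated hE hsat (fun _ _ huv hva ↦ hE.trans huv hva)
    (hE.trans hwb (hE.symm hcb)) hca

end Saturation

/-- Let `X` be Polish and `E` an equivalence relation with open saturations of open
sets and Gδ classes. If `[x] ≠ [y]` and `[y]` meets the closure of `[x]`, then the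
closure of `[y]` is disjoint from `[x]`. -/
theorem closure_class_disjoint {X : Type*} [TopologicalSpace X] [PolishSpace X]
    (E : X → X → Prop) (hE : Equivalence E)
    (hsat : ∀ U : Set X, IsOpen U → IsOpen {y : X | ∃ x ∈ U, E y x})
    (hGδ : ∀ x : X, IsGδ {y : X | E y x})
    (x y : X) (hne : {z : X | E z x} ≠ {z : X | E z y})
    (hmeet : ({z : X | E z y} ∩ closure {z : X | E z x}).Nonempty) :
    closure {z : X | E z y} ∩ {z : X | E z x} = ∅ := by
  by_contra h
  obtain ⟨w, hwy, hwx⟩ := nonempty_iff_ne_empty.2 h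
  have hyx := class_subset_closure_class_of_inter_nonempty hE hsat hmeet
  have hxy := class_subset_closure_class_of_inter_nonempty hE hsat ⟨w, hwx, hwy⟩
  have hclosure : closure {z : X | E z x} = closure {z : X | E z y} :=
    (closure_minimal hxy isClosed_closure).antisymm (closure_minimal hyx isClosed_closure)
  obtain ⟨p, hpx, hpy⟩ :=
    (hGδ x).inter_nonempty_of_closure_eq (hGδ y) hclosure ⟨x, hE.refl x⟩
  exact hne <| Set.ext fun z ↦
    ⟨fun hz ↦ hE.trans hz (hE.trans (hE.symm hpx) hpy),
      fun hz ↦ hE.trans hz (hE.trans (hE.symm hpy) hpx)⟩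
end

section
/- Let X be a Polish space and E an equivalence relation on X such that the E-saturation of every open subset of X is open. Then the following are equivalent: (1) every E-class is a Gδ subset of X; (2) E is a Gδ subset of X × X; (3) the quotient space X/E with the quotient topology is T₀. -/
/-!
The hypothesis says that the quotient map `π : X → X/S` is open, so `π` commutes with
closures and `X/S` is second countable.

If every class is Gδ and `π x`, `π y` are inseparable, the classes of `x` and `y` have the same
closure `C`; both are dense Gδ subsets of the Polish space `C`, so by Baire they meet, i.e.
`π x = π y`. If `X/S` is T₀, then `x S y` iff `π x` and `π y` lie in the same members of a
countable basis of `X/S`; each such condition is open-or-closed in the metrizable `X × X`, so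
the relation is Gδ. Classes are sections of the relation, hence Gδ if it is.
-/

open Set Topology TopologicalSpace

section

variable {X Y Z : Type*} [TopologicalSpace X] [TopologicalSpace Y] [TopologicalSpace Z]

theorem IsGδ.inter_nonempty_of_closure_eq_s14 [IsCompletelyMetrizableSpace X] {A B : Set X}
    (hA : IsGδ A) (hB : IsGδ B) (hAB : closure A = closure B) (hne : A.Nonempty) :
    (A ∩ B).Nonempty := by
  have := isClosed_closure.isCompletelyMetrizableSpace (s := closure A)
  have : Nonempty (closure A) := ⟨⟨hne.some, subset_closure hne.some_mem⟩⟩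
  have dense_of_closure_eq {s : Set X} (hs : closure s = closure A) :
      Dense ((↑) ⁻¹' s : Set (closure A)) := by
    rw [Subtype.dense_iff, Subtype.image_preimage_coe, ← hs,
      inter_eq_right.2 subset_closure]
  obtain ⟨z, hzA, hzB⟩ := (Dense.inter_of_Gδ (hA.preimage continuous_subtype_val)
    (hB.preimage continuous_subtype_val) (dense_of_closure_eq rfl)
    (dense_of_closure_eq hAB.symm)).nonempty
  exact ⟨z, hzA, hzB⟩

theorem isGδ_setOf_mem_iff_mem [PerfectlyNormalSpace Z] {U V : Set Z} (hU : IsOpen U)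
    (hV : IsOpen V) : IsGδ {z | z ∈ U ↔ z ∈ V} := by
  have : {z | z ∈ U ↔ z ∈ V} = (U ∩ V) ∪ (Uᶜ ∩ Vᶜ) := by
    ext z
    simp only [mem_ofPred_eq, mem_union, mem_inter_iff, mem_compl_iff]
    tauto
  rw [this]
  exact (hU.inter hV).isGδ.union (hU.isClosed_compl.inter hV.isClosed_compl).isGδ

theorem isGδ_eq [T0Space Y] [SecondCountableTopology Y] [PerfectlyNormalSpace Z]
    {f g : Z → Y} (hf : Continuous f) (hg : Continuous g) : IsGδ {z | f z = g z} := by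
  have : {z | f z = g z} = ⋂ s ∈ countableBasis Y, {z | z ∈ f ⁻¹' s ↔ z ∈ g ⁻¹' s} := by
    ext z
    simp only [mem_ofPred_eq, mem_iInter, mem_preimage, (isBasis_countableBasis Y).eq_iff]
  rw [this]
  exact .biInter (countable_countableBasis Y) fun s hs ↦
    isGδ_setOf_mem_iff_mem ((isOpen_of_mem_countableBasis hs).preimage hf)
      ((isOpen_of_mem_countableBasis hs).preimage hg)

end

namespace Setoid

variable {X : Type*} (S : Setoid X)

theorem preimage_mk_singleton (x : X) : Quotient.mk S ⁻¹' {Quotient.mk S x} = {y | S.r y x} :=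
  Set.ext fun _ ↦ Quotient.eq

theorem preimage_image_mk (U : Set X) :
    Quotient.mk S ⁻¹' (Quotient.mk S '' U) = {y | ∃ x ∈ U, S.r y x} :=
  Set.ext fun _ ↦ exists_congr fun _ ↦ and_congr_right fun _ ↦ Quotient.eq.trans ⟨S.symm, S.symm⟩

variable [TopologicalSpace X]

theorem isOpenMap_mk_of_isOpen_saturation
    (hsat : ∀ U : Set X, IsOpen U → IsOpen {y : X | ∃ x ∈ U, S.r y x}) :
    IsOpenMap (Quotient.mk S) := fun U hU ↦ by
  rw [← isQuotientMap_quotient_mk'.isOpen_preimage]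
  exact S.preimage_image_mk U ▸ hsat U hU

theorem closure_setOf_rel_eq_of_inseparable (hS : IsOpenMap (Quotient.mk S)) {x y : X}
    (h : Inseparable (Quotient.mk S x) (Quotient.mk S y)) :
    closure {z | S.r z x} = closure {z | S.r z y} := by
  simp only [← preimage_mk_singleton,
    ← hS.preimage_closure_eq_closure_preimage continuous_quotient_mk',
    inseparable_iff_closure_eq.1 h]

theorem t0Space_quotient_of_isGδ_setOf_rel [IsCompletelyMetrizableSpace X]
    (hS : IsOpenMap (Quotient.mk S)) (h : ∀ x, IsGδ {y | S.r y x}) :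
    T0Space (Quotient S) := by
  refine t0Space_iff_inseparable _ |>.2 fun a b hab ↦ ?_
  induction a using Quotient.inductionOn with | h x => ?_
  induction b using Quotient.inductionOn with | h y => ?_
  obtain ⟨z, hzx, hzy⟩ := (h x).inter_nonempty_of_closure_eq_s14 (h y)
    (S.closure_setOf_rel_eq_of_inseparable hS hab) ⟨x, S.refl x⟩
  exact Quotient.sound (S.trans (S.symm hzx) hzy)

theorem isGδ_setOf_rel_of_t0Space [SecondCountableTopology X] [PseudoMetrizableSpace X]
    [T0Space (Quotient S)] (hS : IsOpenMap (Quotient.mk S)) :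
    IsGδ {p : X × X | S.r p.1 p.2} := by
  have := Quotient.secondCountableTopology hS
  simpa only [Quotient.eq] using isGδ_eq (f := fun p : X × X ↦ Quotient.mk S p.1)
    (g := fun p ↦ Quotient.mk S p.2) (continuous_quotient_mk'.comp continuous_fst)
    (continuous_quotient_mk'.comp continuous_snd)

end Setoid

/-- Let `X` be Polish and `S` an equivalence relation on `X` whose saturations of open
sets are open. The following are equivalent: every class is Gδ; the relation is Gδ in
`X × X`; the quotient topology is T₀. -/
theorem gdelta_orbits_tfae {X : Type*} [TopologicalSpace X] [PolishSpace X]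
    (S : Setoid X)
    (hsat : ∀ U : Set X, IsOpen U → IsOpen {y : X | ∃ x ∈ U, S.r y x}) :
    ((∀ x : X, IsGδ {y : X | S.r y x}) ↔ IsGδ {p : X × X | S.r p.1 p.2}) ∧
    ((∀ x : X, IsGδ {y : X | S.r y x}) ↔ T0Space (Quotient S)) := by
  have hS := S.isOpenMap_mk_of_isOpen_saturation hsat
  have classes_of_rel (h : IsGδ {p : X × X | S.r p.1 p.2}) (x : X) : IsGδ {y | S.r y x} :=
    h.preimage (continuous_id.prodMk continuous_const)
  have rel_of_t0 (h : T0Space (Quotient S)) : IsGδ {p : X × X | S.r p.1 p.2} :=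
    S.isGδ_setOf_rel_of_t0Space hS
  have t0_of_classes := S.t0Space_quotient_of_isGδ_setOf_rel hS
  exact ⟨⟨fun h ↦ rel_of_t0 (t0_of_classes h), classes_of_rel⟩,
    ⟨t0_of_classes, fun h ↦ classes_of_rel (rel_of_t0 h)⟩⟩
end

section
/- Let X be a Polish space and E an equivalence relation on X such that the E-saturation of every open subset of X is open and every E-class is a Gδ subset of X. Then E is smooth: there is a Borel map f : X → 2^ω such that for all x, y ∈ X, x E y if and only if f(x) = f(y). -/
/-!
Fix a countable basis `(Bₙ)` and send `x` to the sequence recording whether `x` lies in the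
saturation `[Bₙ]`. These saturations are open, so the map is Borel, and it is constant on classes.
If `x` and `y` have the same code, every basic open set meeting `[y]` also meets `[x]`, so `[x]`
and `[y]` are dense in the same closed set `C`. Both are `Gδ`, and `C` is completely metrizable,
hence Baire, so `[x] ∩ [y] ≠ ∅` and `x E y`.
-/

open Set TopologicalSpace

theorem IsGδ.inter_nonempty_of_subset_closure {X : Type*} [TopologicalSpace X]
    [IsCompletelyPseudoMetrizableSpace X] {s t : Set X} (hs : IsGδ s) (ht : IsGδ t)
    (hst : s ⊆ closure t) (hts : t ⊆ closure s) (hne : s.Nonempty) : (s ∩ t).Nonempty := by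
  set C := closure s
  have : IsCompletelyPseudoMetrizableSpace C :=
    isClosed_closure.isCompletelyPseudoMetrizableSpace
  have : Nonempty C := ⟨⟨hne.some, subset_closure hne.some_mem⟩⟩
  have dense_of_subset {u : Set X} (huC : u ⊆ C) (hCu : C ⊆ closure u) :
      Dense (((↑) : C → X) ⁻¹' u) := by
    rwa [Subtype.dense_iff, Subtype.image_preimage_coe, inter_eq_right.2 huC]
  have hs_dense := dense_of_subset subset_closure subset_rfl
  have ht_dense := dense_of_subset hts (closure_minimal hst isClosed_closure)
  obtain ⟨w, hws, hwt⟩ := (hs_dense.inter_of_Gδ (hs.preimage continuous_subtype_val)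
    (ht.preimage continuous_subtype_val) ht_dense).nonempty
  exact ⟨w, hws, hwt⟩

section Saturation

variable {X : Type*} {E : X → X → Prop}

def saturation (E : X → X → Prop) (U : Set X) : Set X := {y | ∃ x ∈ U, E y x}

theorem mem_saturation_congr (hE : Equivalence E) {x y : X} (hxy : E x y) (U : Set X) :
    x ∈ saturation E U ↔ y ∈ saturation E U :=
  ⟨fun ⟨z, hz, hxz⟩ => ⟨z, hz, hE.trans (hE.symm hxy) hxz⟩,
    fun ⟨z, hz, hyz⟩ => ⟨z, hz, hE.trans hxy hyz⟩⟩

theorem setOf_rel_subset_closure [TopologicalSpace X] (hE : ∀ ⦃a b⦄, E a b → E b a)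
    {b : Set (Set X)} (hb : IsTopologicalBasis b) {x y : X}
    (h : ∀ U ∈ b, y ∈ saturation E U → x ∈ saturation E U) :
    {z | E z y} ⊆ closure {z | E z x} := by
  intro z hzy
  rw [mem_closure_iff]
  intro U hU hzU
  obtain ⟨V, hVb, hzV, hVU⟩ := hb.exists_subset_of_mem_open hzU hU
  obtain ⟨w, hwV, hxw⟩ := h V hVb ⟨z, hzV, hE hzy⟩
  exact ⟨w, hVU hwV, hE hxw⟩

end Saturation

/-- Let `X` be Polish and `E` an equivalence relation with open saturations of open
sets whose classes are all Gδ. Then `E` is smooth: there is a Borel reduction of `E`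
to equality on the Cantor space `2^ω`. -/
theorem smooth_of_gdelta_classes {X : Type*} [TopologicalSpace X] [PolishSpace X]
    [MeasurableSpace X] [BorelSpace X]
    (E : X → X → Prop) (hE : Equivalence E)
    (hsat : ∀ U : Set X, IsOpen U → IsOpen {y : X | ∃ x ∈ U, E y x})
    (hGδ : ∀ x : X, IsGδ {y : X | E y x}) :
    ∃ f : X → (ℕ → Bool), Measurable f ∧ ∀ x y : X, E x y ↔ f x = f y := by
  classical
  obtain ⟨e, he⟩ := exists_seq_basis X
  refine ⟨fun x n => decide (x ∈ saturation E (e n)), ?_,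
    fun x y => ⟨fun hxy => ?_, fun hxy => ?_⟩⟩
  · refine measurable_pi_lambda _ fun n => measurable_to_bool ?_
    have hopen : IsOpen (saturation E (e n)) := hsat _ (he.isOpen (mem_range_self n))
    simpa only [preimage, mem_singleton_iff, decide_eq_true_eq, ofPred_mem_eq]
      using hopen.measurableSet
  · funext n
    simp only [mem_saturation_congr hE hxy]
  · have hcode (n : ℕ) : x ∈ saturation E (e n) ↔ y ∈ saturation E (e n) := by
      simpa using congrFun hxy n
    have hsymm (a b : X) : E a b → E b a := hE.symm
    obtain ⟨w, hwx, hwy⟩ := (hGδ x).inter_nonempty_of_subset_closure (hGδ y)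
      (setOf_rel_subset_closure hsymm he (forall_mem_range.2 fun n => (hcode n).1))
      (setOf_rel_subset_closure hsymm he (forall_mem_range.2 fun n => (hcode n).2))
      ⟨x, hE.refl x⟩
    exact hE.trans (hE.symm hwx) hwy
end

section
/- Let X be a standard Borel space and E an equivalence relation on X. Suppose there is a Borel map f : 2^ω → X such that for all x, y ∈ 2^ω, x E₀ y if and only if f(x) E f(y). Then there exists a Borel probability measure μ on X that is E-ergodic (every E-invariant Borel subset of X is either μ-null or μ-conull) and E-nonatomic (every E-class that is a Borel set has μ-measure zero). -/
/-!
Push the fair coin-tossing measure on `2^ω` forward along `f`. The preimage of an `E`-invariant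
Borel set is invariant under finite modifications, hence a tail event, so Kolmogorov's 0-1 law
applies. The preimage of an `E`-class is empty or a single `E₀`-class, which is countable, and
the coin-tossing measure has no atoms.
-/

open MeasureTheory ProbabilityTheory Filter Set
open scoped ENNReal

lemma countable_setOf_finite_ne {ι : Type*} {β : ι → Type*} [Countable ι]
    [∀ i, Countable (β i)] (x : ∀ i, β i) :
    {y : ∀ i, β i | {i | y i ≠ x i}.Finite}.Countable := by
  classical
  have hcover : {y : ∀ i, β i | {i | y i ≠ x i}.Finite} ⊆ ⋃ s : Finset ι,
      range fun g : ∀ i : s, β i => fun i => if h : i ∈ s then g ⟨i, h⟩ else x i := by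
    intro y hy
    refine mem_iUnion.2 ⟨hy.toFinset, fun i => y i, funext fun i => ?_⟩
    by_cases hi : i ∈ hy.toFinset
    · simp [hi]
    · simpa [hi] using (by simpa using hi : y i = x i).symm
  exact (countable_iUnion fun s => countable_range _).mono hcover

section InfiniteProduct

variable {X : ℕ → Type*} {mX : ∀ i, MeasurableSpace (X i)}

lemma measurableSet_limsup_comap_eval_of_finite_ne {B : Set (∀ i, X i)} (hB : MeasurableSet B)
    (hinv : ∀ x y : ∀ i, X i, {i | x i ≠ y i}.Finite → (x ∈ B ↔ y ∈ B)) :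
    MeasurableSet[limsup (fun i => (mX i).comap fun x : ∀ i, X i => x i) atTop] B := by
  rcases isEmpty_or_nonempty (∀ i, X i) with hX | ⟨⟨x₀⟩⟩
  · rw [Set.eq_empty_of_isEmpty B]
    exact MeasurableSpace.measurableSet_empty _
  rw [limsup_eq_iInf_iSup_of_nat, MeasurableSpace.measurableSet_iInf]
  intro n
  -- `r` only reads the coordinates `≥ n`, and it fixes `B` because it changes finitely many
  let r : (∀ i, X i) → ∀ i, X i := fun x i => if i < n then x₀ i else x i
  have hr : Measurable[⨆ i ≥ n, (mX i).comap fun x : ∀ i, X i => x i, _] r := by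
    refine @measurable_pi_lambda _ _ _ (⨆ i ≥ n, (mX i).comap fun x : ∀ i, X i => x i) _ r
      fun i => ?_
    by_cases hi : i < n
    · simp only [r, hi, if_true]
      exact measurable_const
    · simp only [r, hi, if_false]
      exact (comap_measurable _).mono
        (le_iSup₂ (f := fun i (_ : i ≥ n) => (mX i).comap fun x : ∀ i, X i => x i) i
          (not_lt.1 hi)) le_rfl
  have hfix : r ⁻¹' B = B := by
    ext x
    refine hinv _ _ ((finite_Iio n).subset fun i hi => ?_)
    by_contra hin
    simp [r, show ¬ i < n from hin] at hi
  simpa [hfix] using hr hB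

theorem infinitePi_eq_zero_or_one_of_finite_ne (P : ∀ i, Measure (X i))
    [∀ i, IsProbabilityMeasure (P i)] {B : Set (∀ i, X i)} (hB : MeasurableSet B)
    (hinv : ∀ x y : ∀ i, X i, {i | x i ≠ y i}.Finite → (x ∈ B ↔ y ∈ B)) :
    Measure.infinitePi P B = 0 ∨ Measure.infinitePi P B = 1 :=
  measure_zero_or_one_of_measurableSet_limsup_atTop
    (fun i => (measurable_pi_apply i).comap_le)
    ((iIndepFun_iff_iIndep _ _ _).1 <|
      iIndepFun_infinitePi (P := P) (X := fun _ => id) fun _ => measurable_id)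
    (measurableSet_limsup_comap_eval_of_finite_ne hB hinv)

variable [∀ i, MeasurableSingletonClass (X i)] (P : ∀ i, Measure (X i))
  [∀ i, IsProbabilityMeasure (P i)] {c : ℝ≥0∞}

lemma infinitePi_singleton_le_pow (hP : ∀ i a, P i {a} ≤ c) (x : ∀ i, X i) (n : ℕ) :
    Measure.infinitePi P {x} ≤ c ^ n := calc
  Measure.infinitePi P {x} ≤ Measure.infinitePi P ((Finset.range n : Set ℕ).pi fun i => {x i}) :=
    measure_mono fun y hy i _ => by rw [mem_singleton_iff.1 hy]; rfl
  _ = ∏ i ∈ Finset.range n, P i {x i} :=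
    Measure.infinitePi_pi P fun i _ => measurableSet_singleton _
  _ ≤ c ^ n :=
    (Finset.prod_le_pow_card _ _ _ fun i _ => hP i (x i)).trans_eq (by rw [Finset.card_range])

lemma nullSingletonClass_infinitePi (hc : c < 1) (hP : ∀ i a, P i {a} ≤ c) :
    NullSingletonClass (Measure.infinitePi P) where
  measure_singleton x := le_antisymm
    (ge_of_tendsto' (ENNReal.tendsto_pow_atTop_nhds_zero_of_lt_one hc)
      (infinitePi_singleton_le_pow P hP x)) zero_le

end InfiniteProduct

theorem exists_ergodic_nonatomic_measure_general {X : Type*}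
    [MeasurableSpace X]
    (E : X → X → Prop) (hE : Equivalence E)
    (f : (ℕ → Bool) → X) (hf : Measurable f)
    (hred : ∀ x y : ℕ → Bool, {n : ℕ | x n ≠ y n}.Finite ↔ E (f x) (f y)) :
    ∃ μ : MeasureTheory.Measure X, MeasureTheory.IsProbabilityMeasure μ ∧
      (∀ A : Set X, MeasurableSet A → (∀ x y : X, E x y → (x ∈ A ↔ y ∈ A)) →
        μ A = 0 ∨ μ A = 1) ∧
      (∀ x : X, MeasurableSet {y : X | E y x} → μ {y : X | E y x} = 0) := by
  let coin : ℕ → Measure Bool := fun _ => (PMF.uniformOfFintype Bool).toMeasure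
  have hcoin : ∀ i b, coin i {b} ≤ 2⁻¹ := fun i b => by simp [coin]
  have := nullSingletonClass_infinitePi coin (ENNReal.inv_lt_one.2 ENNReal.one_lt_two) hcoin
  refine ⟨(Measure.infinitePi coin).map f, Measure.isProbabilityMeasure_map hf.aemeasurable,
    fun A hA hAinv => ?_, fun x hx => ?_⟩
  · rw [Measure.map_apply hf hA]
    exact infinitePi_eq_zero_or_one_of_finite_ne coin (hf hA) fun y z hyz =>
      hAinv _ _ ((hred y z).1 hyz)
  · rw [Measure.map_apply hf hx]
    refine Set.Countable.measure_zero ?_ _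
    rcases (f ⁻¹' {y | E y x}).eq_empty_or_nonempty with h | ⟨w₀, hw₀⟩
    · exact h ▸ countable_empty
    exact (countable_setOf_finite_ne w₀).mono fun w hw =>
      (hred w w₀).2 (hE.trans hw (hE.symm hw₀))

/-- If `E₀` (eventual agreement on the Cantor space) Borel reduces to an equivalence
relation `E` on a standard Borel space `X`, then there is an `E`-ergodic,
`E`-nonatomic Borel probability measure on `X`. -/
theorem exists_ergodic_nonatomic_measure {X : Type*}
    [MeasurableSpace X] [StandardBorelSpace X]
    (E : X → X → Prop) (hE : Equivalence E)
    (f : (ℕ → Bool) → X) (hf : Measurable f)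
    (hred : ∀ x y : ℕ → Bool, {n : ℕ | x n ≠ y n}.Finite ↔ E (f x) (f y)) :
    ∃ μ : MeasureTheory.Measure X, MeasureTheory.IsProbabilityMeasure μ ∧
      (∀ A : Set X, MeasurableSet A → (∀ x y : X, E x y → (x ∈ A ↔ y ∈ A)) →
        μ A = 0 ∨ μ A = 1) ∧
      (∀ x : X, MeasurableSet {y : X | E y x} → μ {y : X | E y x} = 0) :=
  exists_ergodic_nonatomic_measure_general E hE f hf hred
end
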